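/- Let E″ be the state with ℓ(E″) = 2k+1 and entries a_0(E″) = 2^{2k+1} − 4, a_1(E″) = 3·2^{2k}, a_j(E″) = 3·2^{2k−j+1} − 2 + 2·(j mod 2) for j ∈ [2, 2k], a_{2k+1}(E″) = 2. Then E″ ↦ E_{k,final}, where E_{k,final} = (0, 2, 2, 2^3, 2^4 − 2, 2^5, 2^6 − 2, …, 2^{2k−1}, 2^{2k} − 2, 2^{2k+1}, 2^{2k+2} − 4, 0), and the sequence of rules E″ → E_{k,final} consists, in order, of one Zero rule, 2^{2k+1} − 4 Increment rules, one Halve rule, 2^{2k+2} − 2 Increment rules, and one Overflow rule. -/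

import Mathlib

/-!
Between its Zero, Halve and Overflow rules the trajectory runs through blocks of Increment
rules, and each block is a binary counter: if the parities of the entries are those of a
counter standing at `c`, the `t`-th step decrements `a_0` and adds `1` to `a_{i+1}`, where
`2 ^ i ∥ c + t` (then `a_i` is the rightmost odd entry). After `m` steps `a_{i+1}` has therefore
gained `⌊(c + m + 2^i) / 2^(i+1)⌋ - ⌊(c + 2^i) / 2^(i+1)⌋`. After its Zero rule `E''` is in
phase with the counter at `c = 0`, and the block stops after `2^(2k+1) - 4` steps, when
`a_0 = -1` triggers the Halve rule. The shifted state is in phase with the counter at `c = 1`;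
after `2^(2k+2) - 2` further steps the counter stands at `2^(2k+2) - 1`, all entries but the
leftmost are even, and the Overflow rule applies. Evaluating the counts at these two times gives
the entries of `E_{k,final}`.
-/

open scoped Classical

namespace Skelet17

/-- The five kinds of transition rules. -/
inductive Rule
  | overflow | halt | zero | halve | increment
  deriving DecidableEq

/-- A state `(a_ℓ, …, a_1, a_0)` (written left to right, `a_0` rightmost) is stored
as the list `[a_0, a_1, …, a_ℓ]`, i.e. with the *rightmost* entry first. -/
abbrev State := List ℤ

/-- The leftmost entry `a_ℓ` of a state. -/
def leftmost (S : State) : ℤ := S.getLastD 0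

/-- The entry `a_i(S)`. -/
def entry (S : State) (i : ℕ) : ℤ := S.getD i 0

/-- `ℓ(S) = |S| - 1`. -/
def ell (S : State) : ℕ := S.length - 1

/-- The Overflow rule applies: the leftmost entry is odd and all other entries are even. -/
def OverflowCond (S : State) : Prop := Odd (leftmost S) ∧ ∀ x ∈ S.dropLast, Even x

/-- The Halt rule applies: all entries are even and the two leftmost entries are `0`. -/
def HaltCond (S : State) : Prop :=
  (∀ x ∈ S, Even x) ∧ S.getLastD 1 = 0 ∧ S.dropLast.getLastD 1 = 0

/-- The Zero rule applies: all entries are even and the Halt rule does not apply. -/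
def ZeroCond (S : State) : Prop := (∀ x ∈ S, Even x) ∧ ¬ HaltCond S

/-- The Halve rule applies: `a_0 = -1` and none of the earlier rules applies. -/
def HalveCond (S : State) : Prop :=
  ¬ OverflowCond S ∧ ¬ HaltCond S ∧ ¬ ZeroCond S ∧ S.headD 0 = -1

/-- The rule applied to a state (the first matching rule). -/
noncomputable def ruleOf (S : State) : Rule :=
  if OverflowCond S then .overflow
  else if HaltCond S then .halt
  else if ZeroCond S then .zero
  else if S.headD 0 = -1 then .halve
  else .increment

/-- The transition function `P`.  (On a Halt state the process stops; we set `P S = S` there.)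
Recall the list stores `a_0` first, so e.g. the Overflow rule
`(2a_ℓ+1, 2a_{ℓ-1}, …, 2a_0) ↦ (0, 2a_ℓ+2, 2a_{ℓ-1}, …, 2a_0)` appends a `0` at the end of
the list and adds `1` to the previously last element. -/
noncomputable def P (S : State) : State :=
  match ruleOf S with
  | .overflow => S.dropLast ++ [leftmost S + 1, 0]
  | .halt => S
  | .zero => (S.set 0 (S.headD 0 - 1)).set (S.length - 1) (leftmost S + 1) ++ [0, 0]
  | .halve => S.tail
  | .increment =>
      let i := S.findIdx (fun x => x % 2 != 0)   -- index of the rightmost odd entry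
      (S.set (i + 1) (S.getD (i + 1) 0 + 1)).set 0 (S.headD 0 - 1)

/-- `S ↦ T` : some iterate of `P` sends `S` to `T`. -/
def Reaches (S T : State) : Prop := ∃ m : ℕ, P^[m] S = T

/-- `σ(S) = +1` if the sum of the entries is odd, `-1` if it is even. -/
noncomputable def sigma (S : State) : ℤ := if Odd S.sum then 1 else -1

/-- `n(S)`: the natural number whose Gray code digits (least significant first) are
`a_1 mod 2, a_2 mod 2, …, a_ℓ mod 2`.  Equivalently (standard Gray-code decoding),
bit `i` of `n(S)` is the parity of `a_{i+1} + ⋯ + a_ℓ`. -/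
def nOf (S : State) : ℕ :=
  ∑ i ∈ Finset.range (ell S),
    2 ^ i * ((∑ j ∈ Finset.Icc (i + 1) (ell S), entry S j) % 2).toNat

/-- `⟨a / 2^j⟩` : the nearest integer to `a / 2^j`, rounding half-integers up. -/
def nearest (j a : ℕ) : ℕ := (2 * a + 2 ^ j) / 2 ^ (j + 1)

/-- `d_j(a, b) = |⟨a/2^j⟩ - ⟨b/2^j⟩|`. -/
def dd (j a b : ℕ) : ℕ := Nat.dist (nearest j a) (nearest j b)

/-- `S_k = (0, 2, 2^2, …, 2^{2k}, 0)`. -/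
def Sk (k : ℕ) : State :=
  0 :: (((List.range (2 * k)).map fun i => (2 : ℤ) ^ (2 * k - i)) ++ [0])

/-- An empty state: `n(E) = 0`, `σ(E) = -1`, and the next rule applied is not Halt. -/
def IsEmptyState (E : State) : Prop :=
  E ≠ [] ∧ nOf E = 0 ∧ sigma E = -1 ∧ ruleOf E ≠ Rule.halt

/-- `m` is the first positive time at which the trajectory of `E` is at an empty state. -/
def NextEmptyAt (E : State) (m : ℕ) : Prop :=
  0 < m ∧ IsEmptyState (P^[m] E) ∧ ∀ t, 0 < t → t < m → ¬ IsEmptyState (P^[t] E)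

/-- `N(E)` : the next empty state after `E` (junk value `[]` if it does not exist). -/
noncomputable def N (E : State) : State :=
  if h : ∃ m, NextEmptyAt E m then P^[h.choose] E else []

/-- The rule applied at time `j` belongs to `T_E`, the sequence of rules from `E` to the
next empty state after `E` (all rules after `E` when no next empty state exists). -/
def InTE (E : State) (j : ℕ) : Prop := ∀ t, 0 < t → t ≤ j → ¬ IsEmptyState (P^[t] E)

/-- Weakly embanked: `T_E` consists of one Zero rule at the start and contains at least two
Halve rules, and all other rules before the second Halve rule are Increment rules. -/
def WeaklyEmbanked (E : State) : Prop :=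
  IsEmptyState E ∧
  ∃ j₁ j₂, 0 < j₁ ∧ j₁ < j₂ ∧ InTE E j₂ ∧
    ruleOf (P^[j₁] E) = Rule.halve ∧ ruleOf (P^[j₂] E) = Rule.halve ∧
    ∀ t, 0 < t → t < j₂ → t ≠ j₁ → ruleOf (P^[t] E) = Rule.increment

/-- Embanked: the next empty state `N(E)` exists and the non-Increment rules of `T_E` consist
of exactly one Zero rule at the start and exactly two Halve rules elsewhere. -/
def Embanked (E : State) : Prop :=
  IsEmptyState E ∧
  ∃ m j₁ j₂, NextEmptyAt E m ∧ 0 < j₁ ∧ j₁ < j₂ ∧ j₂ < m ∧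
    ruleOf (P^[j₁] E) = Rule.halve ∧ ruleOf (P^[j₂] E) = Rule.halve ∧
    ∀ t, 0 < t → t < m → t ≠ j₁ → t ≠ j₂ → ruleOf (P^[t] E) = Rule.increment

/-- `h_i(E)` (`i ∈ {1,2}`): the value of `n` at the state immediately *after* the `i`-th
Halve rule applied after `E`. -/
noncomputable def hVal (E : State) (i : ℕ) : ℕ :=
  nOf (P^[Nat.nth (fun j => ruleOf (P^[j] E) = Rule.halve) (i - 1) + 1] E)

/-- `s_i(E)` (`i ∈ {1,2}`): the value of `n` at the state immediately *before* the `i`-th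
Halve rule applied after `E`. -/
noncomputable def sVal (E : State) (i : ℕ) : ℕ :=
  nOf (P^[Nat.nth (fun j => ruleOf (P^[j] E) = Rule.halve) (i - 1)] E)

/-- `E[i]` : the state `E` with the entry `a_i` replaced by `a_i + 2`. -/
def bump (E : State) (i : ℕ) : State := E.set i (E.getD i 0 + 2)

/-- `N'(E) = N^{⌈(i+1)/2⌉}(E)` for an embanked state `E` with `N(E) = E[i]`
(junk value `E` if no such `i` exists). -/
noncomputable def N' (E : State) : State :=
  if h : ∃ i, i < E.length ∧ N E = bump E i then N^[(h.choose + 2) / 2] E else E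

/-- A rooted embanked state: an embanked state obtained from `S_k` by applying `N'`
some number of times. -/
def RootedEmbanked (k : ℕ) (E : State) : Prop :=
  Embanked E ∧ ∃ e : ℕ, N'^[e] (Sk k) = E

/-- `κ_{E→E'}(j)` : the number of steps `S ↦ N(S)` with `N(S) = S[j]` along the chain
`E, N(E), N²(E), …, N^[t](E) = E'`. -/
noncomputable def kappa (E : State) (t j : ℕ) : ℕ :=
  ((Finset.range t).filter fun s => N (N^[s] E) = bump (N^[s] E) j).card


/-- `E_{k,final} = (0, 2, 2, 2^3, 2^4-2, 2^5, 2^6-2, …, 2^{2k-1}, 2^{2k}-2, 2^{2k+1}, 2^{2k+2}-4, 0)`,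
i.e. `a_0 = 0`, `a_1 = 2^{2k+2} - 4`, `a_j = 2^{2k+3-j} - 2·(j mod 2)` for `j ∈ [2, 2k+2]`,
and `a_{2k+3} = 0` (stored rightmost-first). -/
def Efinal (k : ℕ) : State :=
  0 :: ((2 : ℤ) ^ (2 * k + 2) - 4) ::
    (((List.range (2 * k + 1)).map fun i =>
        (2 : ℤ) ^ (2 * k + 1 - i) - 2 * ((i % 2 : ℕ) : ℤ)) ++ [0])

def tabulate (n : ℕ) (f : ℕ → ℤ) : State := (List.range n).map f

@[simp] lemma length_tabulate (n : ℕ) (f : ℕ → ℤ) : (tabulate n f).length = n := by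
  simp [tabulate]

lemma entry_eq_getElem {S : State} {i : ℕ} (h : i < S.length) : entry S i = S[i] :=
  List.getD_eq_getElem _ _ h

lemma entry_eq_zero {S : State} {i : ℕ} (h : S.length ≤ i) : entry S i = 0 :=
  List.getD_eq_default _ _ h

lemma entry_tabulate {n : ℕ} {f : ℕ → ℤ} {i : ℕ} (h : i < n) :
    entry (tabulate n f) i = f i := by
  rw [entry_eq_getElem (by simpa using h)]
  simp [tabulate]

lemma entry_mem {S : State} {i : ℕ} (h : i < S.length) : entry S i ∈ S := by
  rw [entry_eq_getElem h]
  exact List.getElem_mem h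

lemma ext_entry {S T : State} (hlen : S.length = T.length)
    (h : ∀ i < S.length, entry S i = entry T i) : S = T := by
  refine List.ext_getElem hlen fun i hS hT => ?_
  rw [← entry_eq_getElem, ← entry_eq_getElem, h i hS]

lemma eq_tabulate {S : State} {n : ℕ} {f : ℕ → ℤ} (hlen : S.length = n)
    (h : ∀ i < n, entry S i = f i) : S = tabulate n f :=
  ext_entry (by simp [hlen]) fun i hi => by rw [entry_tabulate (hlen ▸ hi), h i (hlen ▸ hi)]

lemma tabulate_congr {n : ℕ} {f f' : ℕ → ℤ} (h : ∀ i < n, f i = f' i) :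
    tabulate n f = tabulate n f' :=
  eq_tabulate (by simp) fun i hi => by rw [entry_tabulate hi, h i hi]

lemma headD_eq_entry (S : State) : S.headD 0 = entry S 0 := by
  cases S <;> rfl

lemma leftmost_eq_entry (S : State) : leftmost S = entry S (S.length - 1) := by
  rcases S.eq_nil_or_concat with rfl | ⟨L, b, rfl⟩
  · rfl
  · simp [leftmost, entry]

lemma entry_set (S : State) (j : ℕ) (x : ℤ) (i : ℕ) :
    entry (S.set j x) i = if i = j ∧ j < S.length then x else entry S i := by
  simp only [entry, List.getD_eq_getElem?_getD, List.getElem?_set]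
  split_ifs <;> grind

lemma entry_append (S T : State) (i : ℕ) :
    entry (S ++ T) i = if i < S.length then entry S i else entry T (i - S.length) := by
  split_ifs with h
  · exact List.getD_append _ _ _ _ h
  · exact List.getD_append_right _ _ _ _ (by omega)

lemma mem_dropLast_of_lt {S : State} {i : ℕ} (h : i + 1 < S.length) :
    entry S i ∈ S.dropLast := by
  have h' : i < S.dropLast.length := by simp; omega
  rw [entry_eq_getElem (by omega), ← List.getElem_dropLast h']
  exact List.getElem_mem h'

lemma tabulate_succ (n : ℕ) (f : ℕ → ℤ) : tabulate (n + 1) f = tabulate n f ++ [f n] := by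
  simp [tabulate, List.range_succ]

lemma tabulate_succ' (n : ℕ) (f : ℕ → ℤ) :
    tabulate (n + 1) f = f 0 :: tabulate n fun i => f (i + 1) := by
  simp [tabulate, List.range_succ_eq_map]

lemma tail_tabulate (n : ℕ) (f : ℕ → ℤ) :
    (tabulate (n + 1) f).tail = tabulate n fun i => f (i + 1) := by
  rw [tabulate_succ', List.tail_cons]

lemma entry_tabulate_eq {n : ℕ} {f : ℕ → ℤ} (hf : ∀ i ≥ n, f i = 0) (i : ℕ) :
    entry (tabulate n f) i = f i := by
  rcases lt_or_ge i n with h | h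
  · exact entry_tabulate h
  · rw [entry_eq_zero (by simpa using h), hf i h]

lemma getLastD_eq_leftmost {S : State} (hS : S ≠ []) (d : ℤ) : S.getLastD d = leftmost S := by
  obtain ⟨L, b, rfl⟩ := (S.eq_nil_or_concat).resolve_left hS
  simp [leftmost]

lemma not_odd_of_forall_even {S : State} (heven : ∀ x ∈ S, Even x) {i : ℕ}
    (hi : i < S.length) :
    ¬ Odd (entry S i) :=
  Int.not_odd_iff_even.mpr (heven _ (entry_mem hi))

lemma ruleOf_eq_zero {S : State} (heven : ∀ x ∈ S, Even x) (htop : leftmost S ≠ 0) :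
    ruleOf S = .zero := by
  have hS : S ≠ [] := by rintro rfl; exact htop rfl
  have hlen : S.length - 1 < S.length := by
    have := List.length_pos_iff.mpr hS; omega
  have hO : ¬ OverflowCond S := fun h =>
    not_odd_of_forall_even heven hlen (leftmost_eq_entry S ▸ h.1)
  have hH : ¬ HaltCond S := fun h => htop (by rw [← getLastD_eq_leftmost hS 1]; exact h.2.1)
  rw [ruleOf, if_neg hO, if_neg hH, if_pos ⟨heven, hH⟩]

lemma P_of_zero {S : State} (h : ruleOf S = .zero) (h2 : 2 ≤ S.length) :
    P S = tabulate (S.length + 2) fun i =>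
      entry S i - (if i = 0 then 1 else 0) + (if i = S.length - 1 then 1 else 0) := by
  rw [P, h]
  refine eq_tabulate (by simp) fun i hi => ?_
  simp only [entry_append, entry_set, List.length_set, headD_eq_entry, leftmost_eq_entry]
  by_cases hi' : i < S.length
  · simp only [hi', if_true]
    split_ifs <;> grind
  · have h0 : entry S i = 0 := entry_eq_zero (by omega)
    have h1 : entry [(0 : ℤ), 0] (i - S.length) = 0 := by
      rcases i - S.length with _ | _ | _ <;> rfl
    simp only [hi', if_false, h0, h1]
    split_ifs <;> omega

lemma ruleOf_eq_halve {S : State} (h2 : 2 ≤ S.length) (h0 : entry S 0 = -1) :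
    ruleOf S = .halve := by
  have hodd : Odd (entry S 0) := by rw [h0]; decide
  have hnot : ¬ ∀ x ∈ S, Even x := fun h => not_odd_of_forall_even h (by omega) hodd
  have hO : ¬ OverflowCond S := fun h =>
    Int.not_odd_iff_even.mpr (h.2 _ (mem_dropLast_of_lt (by omega))) hodd
  have hH : ¬ HaltCond S := fun h => hnot h.1
  have hZ : ¬ ZeroCond S := fun h => hnot h.1
  rw [ruleOf, if_neg hO, if_neg hH, if_neg hZ, if_pos (by rw [headD_eq_entry, h0])]

lemma P_of_halve {S : State} (h : ruleOf S = .halve) : P S = S.tail := by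
  rw [P, h]

lemma ruleOf_eq_increment {S : State} {j : ℕ} (hj : j + 1 < S.length) (hodd : Odd (entry S j))
    (h0 : entry S 0 ≠ -1) : ruleOf S = .increment := by
  have hnot : ¬ ∀ x ∈ S, Even x := fun h => not_odd_of_forall_even h (by omega) hodd
  have hO : ¬ OverflowCond S := fun h =>
    Int.not_odd_iff_even.mpr (h.2 _ (mem_dropLast_of_lt hj)) hodd
  have hH : ¬ HaltCond S := fun h => hnot h.1
  have hZ : ¬ ZeroCond S := fun h => hnot h.1
  rw [ruleOf, if_neg hO, if_neg hH, if_neg hZ, if_neg (by rwa [headD_eq_entry])]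

lemma findIdx_odd_eq {S : State} {j : ℕ} (hj : j < S.length) (hodd : Odd (entry S j))
    (hbelow : ∀ i < j, Even (entry S i)) : S.findIdx (fun x => x % 2 != 0) = j := by
  rw [List.findIdx_eq hj]
  refine ⟨?_, fun i hij => ?_⟩
  · simp [← entry_eq_getElem hj, Int.odd_iff.mp hodd]
  · simp [← entry_eq_getElem (show i < S.length by omega), Int.even_iff.mp (hbelow i hij)]

lemma P_of_increment {S : State} {j : ℕ} (h : ruleOf S = .increment) (hj : j < S.length)
    (hodd : Odd (entry S j)) (hbelow : ∀ i < j, Even (entry S i)) :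
    P S = tabulate S.length fun i =>
      entry S i - (if i = 0 then 1 else 0) + (if i = j + 1 then 1 else 0) := by
  rw [P, h]
  simp only [findIdx_odd_eq hj hodd hbelow]
  refine eq_tabulate (by simp) fun i hi => ?_
  simp only [entry_set, List.length_set, headD_eq_entry, show S.getD (j + 1) 0 = entry S (j + 1)
    from rfl]
  split_ifs <;> grind

lemma ruleOf_eq_overflow {S : State} (hodd : Odd (leftmost S))
    (heven : ∀ i, i + 1 < S.length → Even (entry S i)) : ruleOf S = .overflow := by
  refine if_pos ⟨hodd, fun x hx => ?_⟩
  obtain ⟨i, hi, rfl⟩ := List.mem_iff_getElem.mp hx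
  rw [List.getElem_dropLast, ← entry_eq_getElem]
  exact heven i (by simp at hi; omega)

lemma overflowCond_of_ruleOf_eq {S : State} (h : ruleOf S = .overflow) : OverflowCond S := by
  unfold ruleOf at h
  split_ifs at h
  assumption

lemma P_of_overflow {S : State} (h : ruleOf S = .overflow) :
    P S = tabulate (S.length + 1) fun i => entry S i + if i + 1 = S.length then 1 else 0 := by
  have hS : S ≠ [] := by
    rintro rfl
    exact (by decide : ¬ Odd (0 : ℤ)) (overflowCond_of_ruleOf_eq h).1
  obtain ⟨L, b, rfl⟩ := (S.eq_nil_or_concat).resolve_left hS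
  rw [P, h]
  refine eq_tabulate (by simp) fun i hi => ?_
  simp only [List.concat_eq_append, List.dropLast_concat, leftmost, List.getLastD_concat,
    entry_append, List.length_append, List.length_singleton] at hi ⊢
  simp only [entry]
  split_ifs <;> grind

/-- The number of `t ∈ [1, M]` with `2 ^ i ∥ t`. -/
def carries (i M : ℕ) : ℕ := (M + 2 ^ i) / 2 ^ (i + 1)

lemma carries_eq {i M s r : ℕ} (h : M + 2 ^ i = 2 ^ (i + 1) * s + r) (hr : r < 2 ^ (i + 1)) :
    carries i M = s := by
  rw [carries, h, Nat.mul_add_div (by positivity), Nat.div_eq_of_lt hr, add_zero]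

lemma carries_of_eq_mul {i M X : ℕ} (h : M + 1 = 2 ^ (i + 1) * X) : carries i M = X := by
  have := Nat.one_le_two_pow (n := i)
  have := pow_succ 2 i
  exact carries_eq (r := 2 ^ i - 1) (by omega) (by omega)

lemma not_two_pow_succ_dvd {a i m : ℕ} (ha : a ≤ i) (hm : Odd m) :
    ¬ 2 ^ (i + 1) ∣ 2 ^ a * m := by
  intro h
  have h' : 2 ^ a * 2 ∣ 2 ^ a * m := (pow_dvd_pow 2 (by omega : a + 1 ≤ i + 1)).trans h
  exact Nat.not_even_iff_odd.mpr hm (even_iff_two_dvd.mpr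
    ((Nat.mul_dvd_mul_iff_left (by positivity)).mp h'))

lemma two_pow_succ_dvd_iff {i j q : ℕ} :
    2 ^ (i + 1) ∣ 2 ^ j * (2 * q + 1) + 2 ^ i ↔ i = j := by
  refine ⟨fun h => ?_, fun h => ⟨q + 1, by subst h; ring⟩⟩
  by_contra hij
  rcases Nat.lt_or_gt_of_ne hij with hlt | hgt
  · obtain ⟨d, rfl⟩ : ∃ d, j = i + d := ⟨j - i, by omega⟩
    refine not_two_pow_succ_dvd (m := 2 ^ d * (2 * q + 1) + 1) le_rfl ?_
      (h.trans (dvd_of_eq (by ring)))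
    exact (Even.mul_right (Nat.even_pow.mpr ⟨even_two, by omega⟩) _).add_one
  · obtain ⟨d, rfl⟩ : ∃ d, i = j + d := ⟨i - j, by omega⟩
    refine not_two_pow_succ_dvd (a := j) (m := 2 * q + 1 + 2 ^ d) (by omega) ?_
      (h.trans (dvd_of_eq (by ring)))
    exact (odd_two_mul_add_one q).add_even (Nat.even_pow.mpr ⟨even_two, by omega⟩)

lemma carries_succ {i j q M : ℕ} (hM : M + 1 = 2 ^ j * (2 * q + 1)) :
    carries i (M + 1) = carries i M + if i = j then 1 else 0 := by
  rw [carries, carries, show M + 1 + 2 ^ i = M + 2 ^ i + 1 by ring, Nat.succ_div,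
    show M + 2 ^ i + 1 = 2 ^ j * (2 * q + 1) + 2 ^ i by omega]
  simp only [two_pow_succ_dvd_iff]

lemma even_iff_of_eq_two_pow_mul_odd {j q M : ℕ} (hM : M + 1 = 2 ^ j * (2 * q + 1)) :
    Even M ↔ j = 0 := by
  rcases j with _ | j
  · simp only [pow_zero, one_mul] at hM
    exact ⟨fun _ => rfl, fun _ => ⟨q, by omega⟩⟩
  · rw [pow_succ] at hM
    simp only [Nat.add_one_ne_zero, iff_false, Nat.not_even_iff_odd]
    have : 1 ≤ 2 ^ j * (2 * q + 1) := Nat.one_le_iff_ne_zero.mpr (by positivity)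
    have hM' : M + 1 = 2 * (2 ^ j * (2 * q + 1)) := by rw [hM]; ring
    exact ⟨2 ^ j * (2 * q + 1) - 1, by omega⟩

lemma odd_carries_iff {i j q M : ℕ} (hM : M + 1 = 2 ^ j * (2 * q + 1)) (hij : i < j) :
    Odd (carries i M) ↔ i + 1 = j := by
  obtain ⟨d, rfl⟩ : ∃ d, j = i + 1 + d := ⟨j - (i + 1), by omega⟩
  rw [carries_of_eq_mul (X := 2 ^ d * (2 * q + 1)) (by rw [hM]; ring)]
  rcases d with _ | d
  · simp
  · simp [Nat.odd_mul, Nat.even_pow]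

lemma carries_eq_zero {i M : ℕ} (h : M < 2 ^ i) : carries i M = 0 :=
  carries_eq (r := M + 2 ^ i) (by ring) (by rw [pow_succ]; omega)

lemma carries_two_pow_sub_two_pow {a i n : ℕ} (hai : a ≤ i) (hin : i < n) :
    carries i (2 ^ n - 2 ^ a) = 2 ^ (n - (i + 1)) := by
  have h1 : 2 ^ (i + 1) * 2 ^ (n - (i + 1)) = 2 ^ n := by rw [← pow_add]; congr 1; omega
  have h2 : 2 ^ a ≤ 2 ^ i := Nat.pow_le_pow_right (by norm_num) hai
  have h3 : 2 ^ i ≤ 2 ^ n := Nat.pow_le_pow_right (by norm_num) hin.le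
  have h4 : 2 ^ (i + 1) = 2 * 2 ^ i := by ring
  have h5 := Nat.one_le_two_pow (n := a)
  exact carries_eq (r := 2 ^ i - 2 ^ a) (by omega) (by omega)

lemma carries_two_pow_sub_four {i n : ℕ} (hi : 2 ≤ i) (hin : i < n) :
    carries i (2 ^ n - 4) = 2 ^ (n - (i + 1)) :=
  carries_two_pow_sub_two_pow (a := 2) hi hin

lemma carries_two_pow_sub_one {i n : ℕ} (hin : i < n) :
    carries i (2 ^ n - 1) = 2 ^ (n - (i + 1)) :=
  carries_two_pow_sub_two_pow (a := 0) (Nat.zero_le i) hin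

lemma carries_zero_two_pow_sub_four {n : ℕ} (hn : 2 ≤ n) :
    (carries 0 (2 ^ n - 4) : ℤ) = 2 ^ (n - 1) - 2 := by
  have h : 2 ^ n = 4 * 2 ^ (n - 2) := by
    conv_lhs => rw [show n = n - 2 + 2 by omega, pow_add]
    ring
  have h' : 2 ^ (n - 1) = 2 * 2 ^ (n - 2) := by
    conv_lhs => rw [show n - 1 = n - 2 + 1 by omega, pow_succ]
    ring
  have := Nat.one_le_two_pow (n := n - 2)
  rw [carries_eq (s := 2 ^ (n - 1) - 2) (r := 1) (by simp; omega) (by norm_num),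
    Nat.cast_sub (by omega)]
  push_cast
  ring

lemma carries_one_two_pow_sub_four {n : ℕ} (hn : 2 ≤ n) :
    (carries 1 (2 ^ n - 4) : ℤ) = 2 ^ (n - 2) - 1 := by
  have h : 2 ^ n = 4 * 2 ^ (n - 2) := by
    conv_lhs => rw [show n = n - 2 + 2 by omega, pow_add]
    ring
  have := Nat.one_le_two_pow (n := n - 2)
  rw [carries_eq (s := 2 ^ (n - 2) - 1) (r := 2) (by simp; omega) (by norm_num),
    Nat.cast_sub this]
  push_cast
  ring

lemma four_le_two_pow {n : ℕ} (hn : 2 ≤ n) : 4 ≤ 2 ^ n :=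
  (Nat.pow_le_pow_right (by norm_num) hn : 2 ^ 2 ≤ 2 ^ n)

lemma carries_zero_one : carries 0 1 = 1 := rfl

lemma carries_one {i : ℕ} (hi : 1 ≤ i) : carries i 1 = 0 :=
  carries_eq_zero (Nat.one_lt_two_pow (by omega))

/-- The entries after `m` Increment rules applied to entries `b` that are in phase with a binary
counter standing at `c`: the `t`-th step carries into digit `i + 1` exactly when `2 ^ i ∥ c + t`. -/
def runProfile (b : ℕ → ℤ) (c m : ℕ) : ℕ → ℤ
  | 0 => b 0 - m
  | i + 1 => b (i + 1) + ((carries i (c + m) : ℤ) - carries i c)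

@[simp] lemma runProfile_zero (b : ℕ → ℤ) (c : ℕ) : runProfile b c 0 = b := by
  funext i
  cases i <;> simp [runProfile]

section Run

variable {b : ℕ → ℤ} {J c m : ℕ}

lemma odd_runProfile_iff (h0 : Odd (b 0 + c)) (hpar : ∀ i < J, Even (b (i + 1) + carries i c))
    {i j q : ℕ} (hM : c + m + 1 = 2 ^ j * (2 * q + 1)) (hij : i ≤ j) (hjJ : j ≤ J) :
    Odd (runProfile b c m i) ↔ i = j := by
  rcases i with _ | i
  · have := Int.odd_iff.mp h0
    rw [eq_comm, ← even_iff_of_eq_two_pow_mul_odd hM, Int.odd_iff, Nat.even_iff]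
    simp only [runProfile]
    omega
  · have := Int.even_iff.mp (hpar i (by omega))
    rw [← odd_carries_iff hM (by omega), Int.odd_iff, Nat.odd_iff]
    simp only [runProfile]
    omega

lemma P_tabulate_runProfile {n : ℕ} (hJ : J + 1 < n) (h0 : Odd (b 0 + c))
    (hpar : ∀ i < J, Even (b (i + 1) + carries i c)) (hcm : c + m + 1 < 2 ^ (J + 1))
    (hne : b 0 - m ≠ -1) :
    ruleOf (tabulate n (runProfile b c m)) = .increment ∧
      P (tabulate n (runProfile b c m)) = tabulate n (runProfile b c (m + 1)) := by
  obtain ⟨j, _, ⟨q, rfl⟩, hM⟩ := Nat.exists_eq_two_pow_mul_odd (n := c + m + 1) (by omega)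
  have hjJ : j ≤ J := by
    have : 2 ^ j < 2 ^ (J + 1) := lt_of_le_of_lt (hM ▸ Nat.le_mul_of_pos_right _ (by omega)) hcm
    exact Nat.lt_succ_iff.mp ((Nat.pow_lt_pow_iff_right (by norm_num)).mp this)
  have hjn : j < n := by omega
  have hodd : Odd (entry (tabulate n (runProfile b c m)) j) := by
    rw [entry_tabulate hjn, odd_runProfile_iff h0 hpar hM le_rfl hjJ]
  have hbelow : ∀ i < j, Even (entry (tabulate n (runProfile b c m)) i) := fun i hi => by
    rw [entry_tabulate (by omega), ← Int.not_odd_iff_even,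
      odd_runProfile_iff h0 hpar hM hi.le hjJ]
    exact hi.ne
  have hrule : ruleOf (tabulate n (runProfile b c m)) = .increment :=
    ruleOf_eq_increment (by simpa using (by omega : j + 1 < n)) hodd
      (by rwa [entry_tabulate (by omega)])
  refine ⟨hrule, ?_⟩
  rw [P_of_increment hrule (by simpa using hjn) hodd hbelow, length_tabulate]
  refine tabulate_congr fun i hi => ?_
  rw [entry_tabulate hi]
  rcases i with _ | i
  · simp [runProfile]; ring
  · rw [runProfile, runProfile, ← add_assoc, carries_succ hM, if_neg (by omega)]
    by_cases hij : i = j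
    · rw [if_pos (by omega), if_pos hij]; push_cast; ring
    · rw [if_neg (by omega), if_neg hij]; push_cast; ring

theorem iterate_P_eq_tabulate_runProfile {n T : ℕ} (hJ : J + 1 < n) (h0 : Odd (b 0 + c))
    (hpar : ∀ i < J, Even (b (i + 1) + carries i c)) (hT : c + T < 2 ^ (J + 1))
    (hb : (T : ℤ) ≤ b 0 + 1) :
    (∀ m ≤ T, P^[m] (tabulate n b) = tabulate n (runProfile b c m)) ∧
      ∀ m < T, ruleOf (tabulate n (runProfile b c m)) = .increment := by
  have hstep : ∀ m < T, _ := fun m hm =>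
    P_tabulate_runProfile (n := n) (m := m) hJ h0 hpar (by omega) (by omega)
  refine ⟨fun m hm => ?_, fun m hm => (hstep m hm).1⟩
  induction m with
  | zero => simp
  | succ m ih => rw [Function.iterate_succ_apply', ih (by omega), (hstep m (by omega)).2]

end Run

def initProfile (k : ℕ) : ℕ → ℤ := fun j =>
  if j = 0 then 2 ^ (2 * k + 1) - 4
  else if j = 1 then 3 * 2 ^ (2 * k)
  else if j ≤ 2 * k then 3 * 2 ^ (2 * k - j + 1) - 2 + 2 * ((j % 2 : ℕ) : ℤ)
  else if j = 2 * k + 1 then 2 else 0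

def zeroProfile (k : ℕ) : ℕ → ℤ := fun i =>
  initProfile k i - (if i = 0 then 1 else 0) + (if i = 2 * k + 1 then 1 else 0)

def halveProfile (k : ℕ) : ℕ → ℤ := fun i =>
  if i = 0 then 2 ^ (2 * k + 2) - 2
  else if i = 1 then 2 ^ (2 * k + 1) - 3
  else if i ≤ 2 * k then 2 ^ (2 * k - i + 2) - 2 + 2 * (((i + 1) % 2 : ℕ) : ℤ)
  else 0

def finalProfile (k : ℕ) : ℕ → ℤ := fun i =>
  if i = 0 then 0
  else if i = 1 then 2 ^ (2 * k + 2) - 4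
  else if i ≤ 2 * k + 2 then 2 ^ (2 * k + 3 - i) - 2 * ((i % 2 : ℕ) : ℤ)
  else 0

lemma even_initProfile {k : ℕ} (hk : 1 ≤ k) (i : ℕ) : Even (initProfile k i) := by
  unfold initProfile
  split_ifs <;> simp [Int.even_sub, Int.even_add, Int.even_pow, parity_simps,
    (by decide : Even (4 : ℤ)), show k ≠ 0 by omega]

lemma eq_tabulate_initProfile {k : ℕ} {E : State} (hlen : E.length = 2 * k + 2)
    (h0 : entry E 0 = (2 : ℤ) ^ (2 * k + 1) - 4) (h1 : entry E 1 = 3 * (2 : ℤ) ^ (2 * k))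
    (hj : ∀ j, 2 ≤ j → j ≤ 2 * k →
      entry E j = 3 * (2 : ℤ) ^ (2 * k - j + 1) - 2 + 2 * ((j % 2 : ℕ) : ℤ))
    (htop : entry E (2 * k + 1) = 2) : E = tabulate (2 * k + 2) (initProfile k) := by
  refine eq_tabulate hlen fun i hi => ?_
  unfold initProfile
  split_ifs with c0 c1 c2 c3
  · rwa [c0]
  · rwa [c1]
  · exact hj i (by omega) c2
  · rwa [c3]
  · omega

lemma zero_step {k : ℕ} (hk : 1 ≤ k) :
    ruleOf (tabulate (2 * k + 2) (initProfile k)) = .zero ∧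
      P (tabulate (2 * k + 2) (initProfile k)) = tabulate (2 * k + 4) (zeroProfile k) := by
  have hvanish : ∀ i ≥ 2 * k + 2, initProfile k i = 0 := fun i hi => by
    simp only [initProfile]; split_ifs <;> omega
  have hrule : ruleOf (tabulate (2 * k + 2) (initProfile k)) = .zero := by
    refine ruleOf_eq_zero (fun x hx => ?_) ?_
    · obtain ⟨i, -, rfl⟩ := List.mem_map.mp hx
      exact even_initProfile hk i
    · rw [leftmost_eq_entry, length_tabulate, entry_tabulate (by omega)]
      simp [initProfile, show k ≠ 0 by omega]
  refine ⟨hrule, ?_⟩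
  rw [P_of_zero hrule (by simp), length_tabulate]
  refine tabulate_congr fun i _ => ?_
  rw [entry_tabulate_eq hvanish, zeroProfile]
  congr 3

lemma increment_run_zeroProfile {k : ℕ} (hk : 1 ≤ k) :
    (∀ m ≤ 2 ^ (2 * k + 1) - 4, P^[m] (tabulate (2 * k + 4) (zeroProfile k)) =
      tabulate (2 * k + 4) (runProfile (zeroProfile k) 0 m)) ∧
    ∀ m < 2 ^ (2 * k + 1) - 4,
      ruleOf (tabulate (2 * k + 4) (runProfile (zeroProfile k) 0 m)) = .increment := by
  have h4 := four_le_two_pow (n := 2 * k + 1) (by omega)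
  refine iterate_P_eq_tabulate_runProfile (J := 2 * k) (by omega) ?_ (fun i hi => ?_)
    (by omega) ?_
  · simp [zeroProfile, initProfile, Int.even_sub, Int.even_pow, parity_simps,
      (by decide : Even (4 : ℤ))]
  · rw [carries_eq_zero (by positivity), Nat.cast_zero, add_zero, zeroProfile,
      if_neg (by omega), if_neg (by omega)]
    simpa using even_initProfile hk (i + 1)
  · simp [zeroProfile, initProfile, Nat.cast_sub h4]

lemma runProfile_zeroProfile {k : ℕ} (hk : 1 ≤ k) {i : ℕ} (hi : i < 2 * k + 3) :
    runProfile (zeroProfile k) 0 (2 ^ (2 * k + 1) - 4) (i + 1) = halveProfile k i := by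
  have h4 := four_le_two_pow (n := 2 * k + 1) (by omega)
  simp only [runProfile, zero_add, carries_eq_zero (Nat.one_le_two_pow), Nat.cast_zero, sub_zero]
  rcases (by omega : i = 0 ∨ i = 1 ∨ (2 ≤ i ∧ i < 2 * k) ∨ i = 2 * k ∨ 2 * k < i) with
    rfl | rfl | ⟨hi2, hi3⟩ | rfl | hi4
  · simp (disch := omega) only [zeroProfile, initProfile, halveProfile, if_neg, ↓reduceIte]
    rw [carries_zero_two_pow_sub_four (by omega), Nat.add_sub_cancel]
    ring
  · simp (disch := omega) only [zeroProfile, initProfile, halveProfile, if_pos, if_neg, ↓reduceIte]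
    rw [carries_one_two_pow_sub_four (by omega), show 2 * k - 2 + 1 = 2 * k - 1 by omega,
      show 2 * k + 1 - 2 = 2 * k - 1 by omega, show 2 * k + 1 = 2 * k - 1 + 2 by omega]
    norm_num
    ring
  · simp (disch := omega) only [zeroProfile, initProfile, halveProfile, if_pos, if_neg]
    rw [carries_two_pow_sub_four hi2 (by omega), show 2 * k - (i + 1) + 1 = 2 * k - i by omega,
      show 2 * k + 1 - (i + 1) = 2 * k - i by omega]
    push_cast
    ring
  · simp (disch := omega) only [zeroProfile, initProfile, halveProfile, if_pos, if_neg, ↓reduceIte]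
    rw [carries_two_pow_sub_four (by omega) (by omega)]
    norm_num
  · simp (disch := omega) only [zeroProfile, initProfile, halveProfile, if_neg]
    rw [carries_eq_zero (lt_of_lt_of_le (by omega) (Nat.pow_le_pow_right (by norm_num) hi4))]
    norm_num

lemma halve_step {k : ℕ} (hk : 1 ≤ k) :
    ruleOf (tabulate (2 * k + 4) (runProfile (zeroProfile k) 0 (2 ^ (2 * k + 1) - 4))) =
        .halve ∧
      P (tabulate (2 * k + 4) (runProfile (zeroProfile k) 0 (2 ^ (2 * k + 1) - 4))) =
        tabulate (2 * k + 3) (halveProfile k) := by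
  have h4 := four_le_two_pow (n := 2 * k + 1) (by omega)
  have hrule : ruleOf (tabulate (2 * k + 4)
      (runProfile (zeroProfile k) 0 (2 ^ (2 * k + 1) - 4))) = .halve := by
    refine ruleOf_eq_halve (by simp) ?_
    rw [entry_tabulate (by omega)]
    simp [runProfile, zeroProfile, initProfile, Nat.cast_sub h4]
  refine ⟨hrule, ?_⟩
  rw [P_of_halve hrule, tail_tabulate]
  exact tabulate_congr fun i hi => runProfile_zeroProfile hk hi

lemma increment_run_halveProfile {k : ℕ} (hk : 1 ≤ k) :
    (∀ m ≤ 2 ^ (2 * k + 2) - 2, P^[m] (tabulate (2 * k + 3) (halveProfile k)) =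
      tabulate (2 * k + 3) (runProfile (halveProfile k) 1 m)) ∧
    ∀ m < 2 ^ (2 * k + 2) - 2,
      ruleOf (tabulate (2 * k + 3) (runProfile (halveProfile k) 1 m)) = .increment := by
  have h4 := four_le_two_pow (n := 2 * k + 2) (by omega)
  refine iterate_P_eq_tabulate_runProfile (J := 2 * k + 1) (by omega) ?_ (fun i hi => ?_)
    (show 1 + (2 ^ (2 * k + 2) - 2) < 2 ^ (2 * k + 2) by omega) ?_
  · simp [halveProfile, Int.even_pow, parity_simps]
  · rcases i with _ | i
    · simp [halveProfile, carries_zero_one, parity_simps]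
      decide
    · rw [carries_one (by omega), Nat.cast_zero, add_zero]
      simp only [halveProfile]
      split_ifs <;> simp [Int.even_sub, Int.even_add, Int.even_pow, parity_simps] <;> omega
  · simp [halveProfile, Nat.cast_sub (by omega : 2 ≤ 2 ^ (2 * k + 2))]

lemma runProfile_halveProfile {k : ℕ} (hk : 1 ≤ k) {i : ℕ} (hi : i < 2 * k + 3) :
    runProfile (halveProfile k) 1 (2 ^ (2 * k + 2) - 2) i =
      finalProfile k i - if i = 2 * k + 2 then 1 else 0 := by
  have h4 := four_le_two_pow (n := 2 * k + 2) (by omega)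
  rcases i with _ | i
  · simp [runProfile, halveProfile, finalProfile, Nat.cast_sub (by omega : 2 ≤ 2 ^ (2 * k + 2))]
  rw [runProfile, show 1 + (2 ^ (2 * k + 2) - 2) = 2 ^ (2 * k + 2) - 1 by omega,
    carries_two_pow_sub_one (by omega)]
  rcases (by omega : i = 0 ∨ (1 ≤ i ∧ i < 2 * k) ∨ i = 2 * k ∨ i = 2 * k + 1) with
    rfl | ⟨hi1, hi2⟩ | rfl | rfl
  · simp (disch := omega) only [halveProfile, finalProfile, if_neg, ↓reduceIte]
    rw [carries_zero_one, show 2 * k + 2 - (0 + 1) = 2 * k + 1 by omega]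
    push_cast
    ring
  · simp (disch := omega) only [halveProfile, finalProfile, if_pos, if_neg]
    rw [carries_one hi1, show 2 * k - (i + 1) + 2 = 2 * k + 1 - i by omega,
      show 2 * k + 2 - (i + 1) = 2 * k + 1 - i by omega,
      show 2 * k + 3 - (i + 1) = 2 * k + 1 - i + 1 by omega]
    obtain ⟨h1, h2⟩ | ⟨h1, h2⟩ : ((i + 1 + 1) % 2 = 0 ∧ (i + 1) % 2 = 1) ∨
        ((i + 1 + 1) % 2 = 1 ∧ (i + 1) % 2 = 0) := by omega
    all_goals rw [h1, h2]; push_cast; ring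
  · simp (disch := omega) only [halveProfile, finalProfile, if_pos, if_neg]
    rw [carries_one (by omega), show 2 * k + 2 - (2 * k + 1) = 1 by omega,
      show 2 * k + 3 - (2 * k + 1) = 2 by omega, show (2 * k + 1) % 2 = 1 by omega]
    norm_num
  · simp (disch := omega) only [halveProfile, finalProfile, if_pos, if_neg, ↓reduceIte]
    rw [carries_one (by omega), show 2 * k + 2 - (2 * k + 1 + 1) = 0 by omega,
      show 2 * k + 3 - (2 * k + 1 + 1) = 1 by omega, show (2 * k + 1 + 1) % 2 = 0 by omega]
    norm_num

lemma even_finalProfile (k i : ℕ) : Even (finalProfile k i) := by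
  unfold finalProfile
  split_ifs with h0 h1 h2
  · exact ⟨0, rfl⟩
  · simp [Int.even_sub, Int.even_pow, parity_simps, (by decide : Even (4 : ℤ))]
  · simp [Int.even_sub, Int.even_pow, parity_simps]
    omega
  · exact ⟨0, rfl⟩

lemma Efinal_eq_tabulate (k : ℕ) : Efinal k = tabulate (2 * k + 4) (finalProfile k) := by
  rw [tabulate_succ', tabulate_succ', tabulate_succ]
  simp only [Efinal, tabulate]
  congr 3
  · refine List.map_congr_left fun i hi => ?_
    have := List.mem_range.mp hi
    rw [finalProfile, if_neg (by omega), if_neg (by omega), if_pos (by omega),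
      show 2 * k + 3 - (i + 1 + 1) = 2 * k + 1 - i by omega,
      show (i + 1 + 1) % 2 = i % 2 by omega]
  · simp [finalProfile]

lemma overflow_step {k : ℕ} (hk : 1 ≤ k) :
    ruleOf (tabulate (2 * k + 3) (runProfile (halveProfile k) 1 (2 ^ (2 * k + 2) - 2))) =
        .overflow ∧
      P (tabulate (2 * k + 3) (runProfile (halveProfile k) 1 (2 ^ (2 * k + 2) - 2))) =
        Efinal k := by
  have hentry : ∀ i < 2 * k + 3, entry (tabulate (2 * k + 3)
      (runProfile (halveProfile k) 1 (2 ^ (2 * k + 2) - 2))) i =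
        finalProfile k i - if i = 2 * k + 2 then 1 else 0 := fun i hi => by
    rw [entry_tabulate hi, runProfile_halveProfile hk hi]
  have hrule : ruleOf (tabulate (2 * k + 3)
      (runProfile (halveProfile k) 1 (2 ^ (2 * k + 2) - 2))) = .overflow := by
    refine ruleOf_eq_overflow ?_ fun i hi => ?_
    · rw [leftmost_eq_entry, length_tabulate, hentry _ (by omega)]
      simp [finalProfile]
    · rw [hentry i (by simp at hi; omega), if_neg (by simp at hi; omega), sub_zero]
      exact even_finalProfile k i
  refine ⟨hrule, ?_⟩
  rw [P_of_overflow hrule, Efinal_eq_tabulate, length_tabulate]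
  refine tabulate_congr fun i hi => ?_
  rcases lt_or_eq_of_le (Nat.lt_succ_iff.mp hi) with hi | rfl
  · rw [hentry i hi]
    split_ifs <;> omega
  · rw [entry_eq_zero (by simp)]
    simp [finalProfile]

/-- Let `E''` be the state with `ℓ(E'') = 2k+1` and entries
`a_0 = 2^{2k+1} - 4`, `a_1 = 3·2^{2k}`, `a_j = 3·2^{2k-j+1} - 2 + 2·(j mod 2)` for
`j ∈ [2, 2k]`, `a_{2k+1} = 2`.  Then `E'' ↦ E_{k,final}` and the rules applied are, in order:
one Zero rule, `2^{2k+1} - 4` Increment rules, one Halve rule, `2^{2k+2} - 2` Increment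
rules, and one Overflow rule. -/
theorem statement_16 (k : ℕ) (E'' : State)
    (hlen : E''.length = 2 * k + 2)
    (h0 : entry E'' 0 = (2 : ℤ) ^ (2 * k + 1) - 4)
    (h1 : entry E'' 1 = 3 * (2 : ℤ) ^ (2 * k))
    (hj : ∀ j, 2 ≤ j → j ≤ 2 * k →
      entry E'' j = 3 * (2 : ℤ) ^ (2 * k - j + 1) - 2 + 2 * ((j % 2 : ℕ) : ℤ))
    (htop : entry E'' (2 * k + 1) = 2) :
    P^[(2 ^ (2 * k + 1) - 4) + (2 ^ (2 * k + 2) - 2) + 3] E'' = Efinal k ∧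
    ruleOf E'' = Rule.zero ∧
    (∀ j, 1 ≤ j → j ≤ 2 ^ (2 * k + 1) - 4 → ruleOf (P^[j] E'') = Rule.increment) ∧
    ruleOf (P^[(2 ^ (2 * k + 1) - 4) + 1] E'') = Rule.halve ∧
    (∀ j, (2 ^ (2 * k + 1) - 4) + 2 ≤ j →
        j ≤ (2 ^ (2 * k + 1) - 4) + (2 ^ (2 * k + 2) - 2) + 1 →
      ruleOf (P^[j] E'') = Rule.increment) ∧
    ruleOf (P^[(2 ^ (2 * k + 1) - 4) + (2 ^ (2 * k + 2) - 2) + 2] E'') = Rule.overflow := by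
  have hk : 1 ≤ k := by
    by_contra hk0
    obtain rfl : k = 0 := by omega
    norm_num [h1] at htop
  obtain rfl := eq_tabulate_initProfile hlen h0 h1 hj htop
  set T₁ := 2 ^ (2 * k + 1) - 4
  set T₂ := 2 ^ (2 * k + 2) - 2
  obtain ⟨hzero, hP₀⟩ := zero_step hk
  obtain ⟨hrun₁, hinc₁⟩ := increment_run_zeroProfile hk
  obtain ⟨hhalve, hP₁⟩ := halve_step hk
  obtain ⟨hrun₂, hinc₂⟩ := increment_run_halveProfile hk
  obtain ⟨hoverflow, hP₂⟩ := overflow_step hk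
  have hA : ∀ m ≤ T₁, P^[m + 1] (tabulate (2 * k + 2) (initProfile k)) =
      tabulate (2 * k + 4) (runProfile (zeroProfile k) 0 m) := fun m hm => by
    rw [Function.iterate_succ_apply, hP₀, hrun₁ m hm]
  have hB : ∀ m ≤ T₂, P^[m + (T₁ + 2)] (tabulate (2 * k + 2) (initProfile k)) =
      tabulate (2 * k + 3) (runProfile (halveProfile k) 1 m) := fun m hm => by
    rw [Function.iterate_add_apply, Function.iterate_succ_apply', hA T₁ le_rfl, hP₁, hrun₂ m hm]
  refine ⟨?_, hzero, fun j hj₁ hj₂ => ?_, hA T₁ le_rfl ▸ hhalve, fun j hj₁ hj₂ => ?_, ?_⟩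
  · rw [show T₁ + T₂ + 3 = (T₂ + (T₁ + 2)) + 1 by omega, Function.iterate_succ_apply',
      hB T₂ le_rfl, hP₂]
  · obtain ⟨m, rfl⟩ : ∃ m, j = m + 1 := ⟨j - 1, by omega⟩
    rw [hA m (by omega)]
    exact hinc₁ m (by omega)
  · obtain ⟨m, rfl⟩ : ∃ m, j = m + (T₁ + 2) := ⟨j - (T₁ + 2), by omega⟩
    rw [hB m (by omega)]
    exact hinc₂ m (by omega)
  · rw [show T₁ + T₂ + 2 = T₂ + (T₁ + 2) by omega, hB T₂ le_rfl]
    exact hoverflow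

end Skelet17
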